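/- In the Golub–Kahan bidiagonalization setup, the LSMR approximation errors to AᵀA are strictly monotonically decreasing: for every k with 1 ≤ k ≤ n−2, ‖AᵀA − Q_{k+2}Q_{k+2}ᵀ(AᵀA)Q_{k+1}Q_{k+1}ᵀ‖ < ‖AᵀA − Q_{k+1}Q_{k+1}ᵀ(AᵀA)Q_kQ_kᵀ‖. -/

import Mathlib

/-!
Put `G = BᵀB`: it is tridiagonal with nonnegative entries and positive diagonal and
superdiagonal, and `AᵀA = Q G Qᵀ`. Because `G` has lower bandwidth one, the `j`-th error
matrix is `Q (G Pⱼ) Qᵀ`, where `Pⱼ = tailProj n j` is the coordinate projection onto the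
indices `≥ j`; so it suffices to show `‖G P_{k+1}‖ < ‖G Pₖ‖`, the inequality `≤` being clear.

Suppose equality holds and let `x` be a unit vector attaining the norm of `G P_{k+1}`. Since `G`
is entrywise nonnegative, `y = |P_{k+1} x|` (entrywise) attains the norm of `M = G Pₖ` as well,
so `y` is an eigenvector of `MᵀM` for `‖M‖²`. Now `y` vanishes at the indices `≤ k`, and row
`i ≥ k` of the eigen-equation is a sum of nonnegative terms containing `(MᵀM)_{i,i+1} y_{i+1}`
with `(MᵀM)_{i,i+1} > 0`; inductively `y = 0`, a contradiction.
-/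

open Matrix

/-- Spectral norm (largest singular value) of a real matrix. -/
noncomputable def specNorm {a b : ℕ} (M : Matrix (Fin a) (Fin b) ℝ) : ℝ :=
  ‖LinearMap.toContinuousLinearMap (Matrix.toEuclideanLin M)‖

/-- The `j`-th largest singular value of a real matrix (`j ≥ 1`), characterized via the
Eckart–Young theorem as the minimal spectral-norm distance to matrices of rank `< j`;
it is `0` when `j` exceeds the smaller dimension. -/
noncomputable def singVal {a b : ℕ} (M : Matrix (Fin a) (Fin b) ℝ) (j : ℕ) : ℝ :=
  sInf {r : ℝ | ∃ D : Matrix (Fin a) (Fin b) ℝ, D.rank < j ∧ r = specNorm (M - D)}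

/-- The matrix of the first `k` columns of `M`. -/
def colSub {a b : ℕ} (M : Matrix (Fin a) (Fin b) ℝ) (k : ℕ) (hk : k ≤ b) :
    Matrix (Fin a) (Fin k) ℝ :=
  M.submatrix id fun j => ⟨j.1, lt_of_lt_of_le j.2 hk⟩

/-- The leading `r × c` submatrix of `M`. -/
def subUL {a b : ℕ} (M : Matrix (Fin a) (Fin b) ℝ) (r c : ℕ) (hr : r ≤ a) (hc : c ≤ b) :
    Matrix (Fin r) (Fin c) ℝ :=
  M.submatrix (fun i => ⟨i.1, lt_of_lt_of_le i.2 hr⟩) (fun j => ⟨j.1, lt_of_lt_of_le j.2 hc⟩)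

open WithLp
open scoped Matrix.Norms.L2Operator RealInnerProductSpace

theorem specNorm_eq_l2_opNorm {a b : ℕ} (M : Matrix (Fin a) (Fin b) ℝ) : specNorm M = ‖M‖ := rfl

theorem ContinuousLinearMap.exists_norm_eq_one_and_norm_apply_eq_opNorm
    {E F : Type*} [NormedAddCommGroup E] [NormedSpace ℝ E] [FiniteDimensional ℝ E]
    [Nontrivial E] [SeminormedAddCommGroup F] [NormedSpace ℝ F] (f : E →L[ℝ] F) :
    ∃ x, ‖x‖ = 1 ∧ ‖f x‖ = ‖f‖ := by
  obtain ⟨x, hx, hmax⟩ :=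
    ((isCompact_sphere (0 : E) 1).image (continuous_norm.comp f.continuous)).sSup_mem
      ((NormedSpace.sphere_nonempty.mpr zero_le_one).image _)
  exact ⟨x, mem_sphere_zero_iff_norm.mp hx, hmax.trans f.sSup_sphere_eq_norm⟩

theorem ContinuousLinearMap.adjoint_apply_apply_eq_of_norm_apply_eq
    {E F : Type*} [NormedAddCommGroup E] [InnerProductSpace ℝ E] [CompleteSpace E]
    [NormedAddCommGroup F] [InnerProductSpace ℝ F] [CompleteSpace F]
    (T : E →L[ℝ] F) {x : E} (hx : ‖T x‖ = ‖T‖ * ‖x‖) :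
    adjoint T (T x) = (‖T‖ ^ 2) • x := by
  have hle : ‖adjoint T (T x)‖ ≤ ‖T‖ ^ 2 * ‖x‖ := by
    simpa [sq, norm_adjoint_comp_self] using (adjoint T ∘L T).le_opNorm x
  have hinner : ⟪adjoint T (T x), x⟫ = ‖T‖ ^ 2 * ‖x‖ ^ 2 := by
    rw [adjoint_inner_left, real_inner_self_eq_norm_sq, hx, mul_pow]
  have hsq : ‖adjoint T (T x) - (‖T‖ ^ 2) • x‖ ^ 2 ≤ 0 := by
    rw [norm_sub_sq_real, real_inner_smul_right, hinner, norm_smul, Real.norm_eq_abs,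
      abs_of_nonneg (sq_nonneg _)]
    nlinarith [norm_nonneg (adjoint T (T x))]
  exact sub_eq_zero.mp <| norm_eq_zero.mp <| pow_eq_zero_iff two_ne_zero |>.mp <|
    le_antisymm hsq (sq_nonneg _)

theorem Fin.sum_castLE_eq_sum_ite {M : Type*} [AddCommMonoid M] {n j : ℕ} (h : j ≤ n)
    (f : Fin n → M) :
    ∑ l : Fin j, f (Fin.castLE h l) = ∑ c : Fin n, if (c : ℕ) < j then f c else 0 := by
  have hmap : Finset.univ.map (Fin.castLEEmb h) = Finset.univ.filter fun c : Fin n => c < j := by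
    ext c
    simp only [Finset.mem_map, Finset.mem_univ, true_and, Finset.mem_filter, Fin.castLEEmb_apply]
    exact ⟨fun ⟨l, hl⟩ => hl ▸ l.2, fun hc => ⟨⟨c, hc⟩, rfl⟩⟩
  rw [← Finset.sum_filter, ← hmap, Finset.sum_map]
  rfl

section Euclidean

variable {ι κ : Type*} [Fintype ι]

theorem EuclideanSpace.norm_toLp_le_of_abs_le {u v : ι → ℝ} (h : ∀ i, |u i| ≤ |v i|) :
    ‖toLp 2 u‖ ≤ ‖toLp 2 v‖ := by
  rw [EuclideanSpace.norm_eq, EuclideanSpace.norm_eq]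
  gcongr with i
  exact h i

theorem Matrix.abs_mulVec_apply_le_mulVec_abs_apply {M : Matrix κ ι ℝ}
    (hM : ∀ i j, 0 ≤ M i j) (v : ι → ℝ) (i : κ) : |(M *ᵥ v) i| ≤ (M *ᵥ fun j => |v j|) i :=
  calc |∑ j, M i j * v j| ≤ ∑ j, |M i j * v j| := Finset.abs_sum_le_sum_abs _ _
    _ = ∑ j, M i j * |v j| := by simp_rw [abs_mul, abs_of_nonneg (hM i _)]

theorem Matrix.norm_mulVec_le_norm_mulVec_abs [Fintype κ] {M : Matrix κ ι ℝ}
    (hM : ∀ i j, 0 ≤ M i j) (v : ι → ℝ) :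
    ‖toLp 2 (M *ᵥ v)‖ ≤ ‖toLp 2 (M *ᵥ fun j => |v j|)‖ :=
  EuclideanSpace.norm_toLp_le_of_abs_le fun i =>
    (abs_mulVec_apply_le_mulVec_abs_apply hM v i).trans (le_abs_self _)

theorem Matrix.mul_apply_nonneg {ν : Type*} {A : Matrix ν ι ℝ} {B : Matrix ι κ ℝ}
    (hA : ∀ i j, 0 ≤ A i j) (hB : ∀ i j, 0 ≤ B i j) (i : ν) (j : κ) : 0 ≤ (A * B) i j :=
  Finset.sum_nonneg fun l _ => mul_nonneg (hA i l) (hB l j)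

theorem Matrix.mul_apply_pos {ν : Type*} {A : Matrix ν ι ℝ} {B : Matrix ι κ ℝ}
    (hA : ∀ i j, 0 ≤ A i j) (hB : ∀ i j, 0 ≤ B i j) {i : ν} {l : ι} {j : κ}
    (hil : 0 < A i l) (hlj : 0 < B l j) : 0 < (A * B) i j :=
  Finset.sum_pos' (fun l _ => mul_nonneg (hA i l) (hB l j)) ⟨l, Finset.mem_univ l, mul_pos hil hlj⟩

variable [DecidableEq ι]

theorem Matrix.exists_norm_toLp_eq_one_and_norm_mulVec_eq [Nonempty ι] (M : Matrix ι ι ℝ) :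
    ∃ v : ι → ℝ, ‖toLp 2 v‖ = 1 ∧ ‖toLp 2 (M *ᵥ v)‖ = ‖M‖ := by
  obtain ⟨x, hx, hMx⟩ := (toEuclideanCLM (𝕜 := ℝ) M).exists_norm_eq_one_and_norm_apply_eq_opNorm
  exact ⟨ofLp x, hx, hMx⟩

theorem Matrix.transpose_mul_self_mulVec_eq_of_norm_mulVec_eq {M : Matrix ι ι ℝ} {v : ι → ℝ}
    (h : ‖toLp 2 (M *ᵥ v)‖ = ‖M‖ * ‖toLp 2 v‖) : (Mᵀ * M) *ᵥ v = ‖M‖ ^ 2 • v := by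
  have := congrArg ofLp
    ((toEuclideanCLM (𝕜 := ℝ) M).adjoint_apply_apply_eq_of_norm_apply_eq (x := toLp 2 v) h)
  rw [← ContinuousLinearMap.star_eq_adjoint, ← map_star] at this
  simpa [← mulVec_mulVec, star_eq_conjTranspose, l2_opNorm_toEuclideanCLM] using this

end Euclidean

theorem Matrix.eq_zero_of_mulVec_eq_smul_of_superdiag_pos {n k : ℕ}
    {S : Matrix (Fin n) (Fin n) ℝ} {y : Fin n → ℝ} {c : ℝ}
    (hS : ∀ i j, 0 ≤ S i j) (hy : ∀ i, 0 ≤ y i) (hSy : S *ᵥ y = c • y)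
    (hsup : ∀ i j : Fin n, k ≤ (i : ℕ) → (j : ℕ) = i + 1 → 0 < S i j)
    (hhead : ∀ i : Fin n, (i : ℕ) ≤ k → y i = 0) : y = 0 := by
  suffices h : ∀ j (hj : j < n), y ⟨j, hj⟩ = 0 from funext fun i => h i i.2
  intro j
  induction j with
  | zero => exact fun _ => hhead _ (Nat.zero_le k)
  | succ j ih =>
    intro hj
    by_cases hjk : j + 1 ≤ k
    · exact hhead _ hjk
    have hrow : ∑ l, S ⟨j, by omega⟩ l * y l = 0 := by
      simpa [ih (by omega), mulVec, dotProduct] using congrFun hSy ⟨j, by omega⟩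
    have hterm := (Finset.sum_eq_zero_iff_of_nonneg fun l _ => mul_nonneg (hS _ l) (hy l)).mp
      hrow ⟨j + 1, hj⟩ (Finset.mem_univ _)
    exact (mul_eq_zero.mp hterm).resolve_left (hsup _ _ (by simp; omega) rfl).ne'

def tailProj (n k : ℕ) : Matrix (Fin n) (Fin n) ℝ :=
  diagonal fun i => if k ≤ (i : ℕ) then 1 else 0

def headProj (n k : ℕ) : Matrix (Fin n) (Fin n) ℝ :=
  diagonal fun i => if (i : ℕ) < k then 1 else 0

section Projections

variable {n k : ℕ}

theorem mul_tailProj_apply {m : ℕ} (T : Matrix (Fin m) (Fin n) ℝ) (i : Fin m) (j : Fin n) :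
    (T * tailProj n k) i j = if k ≤ (j : ℕ) then T i j else 0 := by
  simp [tailProj, mul_diagonal]

theorem tailProj_mulVec_apply (v : Fin n → ℝ) (i : Fin n) :
    (tailProj n k *ᵥ v) i = if k ≤ (i : ℕ) then v i else 0 := by
  simp [tailProj, mulVec_diagonal]

theorem tailProj_mulVec_of_eq_zero {v : Fin n → ℝ} (hv : ∀ i : Fin n, (i : ℕ) < k → v i = 0) :
    tailProj n k *ᵥ v = v := by
  ext i
  rw [tailProj_mulVec_apply]
  split_ifs with h
  · rfl
  · exact (hv i (not_le.mp h)).symm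

theorem tailProj_mul_tailProj_succ : tailProj n k * tailProj n (k + 1) = tailProj n (k + 1) := by
  ext i j
  simp only [tailProj, diagonal_mul_diagonal, diagonal_apply]
  split_ifs <;> first | rfl | omega | simp

theorem norm_tailProj_le_one : ‖tailProj n k‖ ≤ 1 := by
  rw [tailProj, l2_opNorm_diagonal]
  refine pi_norm_le_iff_of_nonneg zero_le_one |>.mpr fun i => ?_
  split_ifs <;> simp

theorem colSub_mul_transpose_colSub {m : ℕ} (Q : Matrix (Fin m) (Fin n) ℝ) (h : k ≤ n) :
    colSub Q k h * (colSub Q k h)ᵀ = Q * headProj n k * Qᵀ := by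
  ext a b
  convert Fin.sum_castLE_eq_sum_ite h (fun c => Q a c * Q b c) using 1
  · rfl
  · rw [mul_apply]
    simp [headProj, mul_diagonal]

theorem sub_headProj_mul_mul_headProj {G : Matrix (Fin n) (Fin n) ℝ}
    (hG : ∀ i l : Fin n, (l : ℕ) + 2 ≤ i → G i l = 0) :
    G - headProj n (k + 1) * G * headProj n k = G * tailProj n k := by
  ext i l
  simp only [Matrix.sub_apply, headProj, tailProj, diagonal_mul, mul_diagonal]
  split_ifs <;> simp <;> first | omega | exact hG i l (by omega)

end Projections

section TailNorm

variable {n k : ℕ} {T : Matrix (Fin n) (Fin n) ℝ}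

theorem norm_mul_tailProj_succ_le :
    ‖T * tailProj n (k + 1)‖ ≤ ‖T * tailProj n k‖ :=
  calc ‖T * tailProj n (k + 1)‖ = ‖T * tailProj n k * tailProj n (k + 1)‖ := by
        rw [Matrix.mul_assoc, tailProj_mul_tailProj_succ]
    _ ≤ ‖T * tailProj n k‖ * ‖tailProj n (k + 1)‖ := l2_opNorm_mul _ _
    _ ≤ ‖T * tailProj n k‖ := mul_le_of_le_one_right (norm_nonneg _) norm_tailProj_le_one

theorem exists_nonneg_norm_mulVec_eq_of_norm_mul_tailProj_succ_eq (hk : k < n)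
    (hT : ∀ i j, 0 ≤ T i j) (hpos : 0 < ‖T * tailProj n k‖)
    (heq : ‖T * tailProj n (k + 1)‖ = ‖T * tailProj n k‖) :
    ∃ y : Fin n → ℝ, (∀ i, 0 ≤ y i) ∧ (∀ i : Fin n, (i : ℕ) ≤ k → y i = 0) ∧ y ≠ 0 ∧
      ‖toLp 2 ((T * tailProj n k) *ᵥ y)‖ = ‖T * tailProj n k‖ * ‖toLp 2 y‖ := by
  have : Nonempty (Fin n) := ⟨⟨k, hk⟩⟩
  obtain ⟨x, hx, hTx⟩ := (T * tailProj n (k + 1)).exists_norm_toLp_eq_one_and_norm_mulVec_eq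
  set w := tailProj n (k + 1) *ᵥ x
  set y : Fin n → ℝ := fun i => |w i|
  have hy_head : ∀ i : Fin n, (i : ℕ) ≤ k → y i = 0 := fun i hi => by
    simp only [y, w, tailProj_mulVec_apply, if_neg (show ¬ k + 1 ≤ (i : ℕ) by omega), abs_zero]
  have hy_le : ‖toLp 2 y‖ ≤ 1 := hx ▸ EuclideanSpace.norm_toLp_le_of_abs_le fun i => by
    simp only [y, w, abs_abs, tailProj_mulVec_apply]
    split_ifs <;> simp
  have hTy : (T * tailProj n k) *ᵥ y = T *ᵥ y := by
    rw [← mulVec_mulVec, tailProj_mulVec_of_eq_zero fun i hi => hy_head i (by omega)]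
  have hTy_ge : ‖T * tailProj n k‖ ≤ ‖toLp 2 ((T * tailProj n k) *ᵥ y)‖ :=
    calc ‖T * tailProj n k‖ = ‖toLp 2 (T *ᵥ w)‖ := by rw [← heq, ← hTx, ← mulVec_mulVec]
      _ ≤ ‖toLp 2 (T *ᵥ y)‖ := norm_mulVec_le_norm_mulVec_abs hT w
      _ = ‖toLp 2 ((T * tailProj n k) *ᵥ y)‖ := by rw [hTy]
  have hTy_le : ‖toLp 2 ((T * tailProj n k) *ᵥ y)‖ ≤ ‖T * tailProj n k‖ * ‖toLp 2 y‖ :=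
    l2_opNorm_mulVec (T * tailProj n k) (toLp 2 y)
  have hy_one : ‖toLp 2 y‖ = 1 := le_antisymm hy_le <|
    le_of_mul_le_mul_left (by rw [mul_one]; exact hTy_ge.trans hTy_le) hpos
  refine ⟨y, fun i => abs_nonneg _, hy_head, fun hy => ?_, ?_⟩
  · rw [hy] at hy_one
    simp at hy_one
  · exact le_antisymm hTy_le (by rwa [hy_one, mul_one])

theorem norm_mul_tailProj_succ_lt (hk : k < n) (hT : ∀ i j, 0 ≤ T i j)
    (hdiag : ∀ i, 0 < T i i) (hsup : ∀ i j : Fin n, (j : ℕ) = i + 1 → 0 < T i j) :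
    ‖T * tailProj n (k + 1)‖ < ‖T * tailProj n k‖ := by
  set M := T * tailProj n k with hM_def
  have hM : ∀ i j, 0 ≤ M i j := fun i j => by
    rw [hM_def, mul_tailProj_apply]; split_ifs <;> simp [hT]
  have hMpos : 0 < ‖M‖ := norm_pos_iff.mpr fun h => (hdiag ⟨k, hk⟩).ne' <| by
    simpa [M, mul_tailProj_apply] using congrFun (congrFun h ⟨k, hk⟩) ⟨k, hk⟩
  refine norm_mul_tailProj_succ_le.lt_of_ne fun heq => ?_
  obtain ⟨y, hy_nonneg, hy_head, hy_ne, hy_max⟩ :=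
    exists_nonneg_norm_mulVec_eq_of_norm_mul_tailProj_succ_eq hk hT hMpos heq
  have hgram_sup : ∀ i j : Fin n, k ≤ (i : ℕ) → (j : ℕ) = i + 1 → 0 < (Mᵀ * M) i j :=
    fun i j hi hj => mul_apply_pos (fun a b => hM b a) hM (l := i)
      (by rw [hM_def, mul_tailProj_apply, if_pos hi]; exact hdiag i)
      (by rw [hM_def, mul_tailProj_apply, if_pos (by omega)]; exact hsup i j hj)
  exact hy_ne <| eq_zero_of_mulVec_eq_smul_of_superdiag_pos
    (mul_apply_nonneg (fun a b => hM b a) hM) hy_nonneg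
    (transpose_mul_self_mulVec_eq_of_norm_mulVec_eq hy_max) hgram_sup hy_head

end TailNorm

theorem conj_sub_conj_headProj_mul_conj_mul_conj_headProj {n k : ℕ}
    {Q G : Matrix (Fin n) (Fin n) ℝ} (hQ : Qᵀ * Q = 1)
    (hG : ∀ i l : Fin n, (l : ℕ) + 2 ≤ i → G i l = 0) :
    Q * G * Qᵀ - Q * headProj n (k + 1) * Qᵀ * (Q * G * Qᵀ) * (Q * headProj n k * Qᵀ) =
      Q * (G * tailProj n k) * Qᵀ := by
  have hQ' : ∀ X : Matrix (Fin n) (Fin n) ℝ, Qᵀ * (Q * X) = X := fun X => by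
    rw [← Matrix.mul_assoc, hQ, Matrix.one_mul]
  rw [← sub_headProj_mul_mul_headProj hG, Matrix.mul_sub, Matrix.sub_mul]
  simp only [Matrix.mul_assoc, hQ']

theorem Matrix.norm_mul_mul_transpose_of_mem_orthogonalGroup {ι : Type*} [Fintype ι]
    [DecidableEq ι] {Q : Matrix ι ι ℝ} (hQ : Q ∈ orthogonalGroup ι ℝ) (X : Matrix ι ι ℝ) :
    ‖Q * X * Qᵀ‖ = ‖X‖ := by
  have hQt : Qᵀ ∈ orthogonalGroup ι ℝ := by
    simpa [star_eq_conjTranspose] using Unitary.star_mem hQ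
  rw [CStarRing.norm_mul_mem_unitary _ hQt, CStarRing.norm_mem_unitary_mul _ hQ]

def IsLowerBidiagonalWith {n : ℕ} (α β : Fin n → ℝ) (B : Matrix (Fin (n + 1)) (Fin n) ℝ) : Prop :=
  ∀ (i : Fin (n + 1)) (j : Fin n),
    B i j = if (i : ℕ) = (j : ℕ) then α j else if (i : ℕ) = (j : ℕ) + 1 then β j else 0

section LowerBidiagonal

variable {n : ℕ} {α β : Fin n → ℝ} {B : Matrix (Fin (n + 1)) (Fin n) ℝ}

theorem IsLowerBidiagonalWith.nonneg (hB : IsLowerBidiagonalWith α β B) (hα : ∀ i, 0 < α i)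
    (hβ : ∀ i, 0 < β i) (i : Fin (n + 1)) (j : Fin n) : 0 ≤ B i j := by
  rw [hB i j]
  split_ifs
  exacts [(hα j).le, (hβ j).le, le_rfl]

theorem IsLowerBidiagonalWith.transpose_mul_self_apply_eq_zero
    (hB : IsLowerBidiagonalWith α β B) (i l : Fin n) (hil : (l : ℕ) + 2 ≤ i) :
    (Bᵀ * B) i l = 0 := by
  rw [mul_apply]
  refine Finset.sum_eq_zero fun r _ => ?_
  rw [transpose_apply, hB r i, hB r l]
  split_ifs <;> first | omega | simp

theorem IsLowerBidiagonalWith.transpose_mul_self_apply_self_pos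
    (hB : IsLowerBidiagonalWith α β B) (hα : ∀ i, 0 < α i) (hβ : ∀ i, 0 < β i) (i : Fin n) :
    0 < (Bᵀ * B) i i := by
  have hBnn := hB.nonneg hα hβ
  refine mul_apply_pos (fun a b => hBnn b a) hBnn (l := i.castSucc) ?_ ?_ <;>
    simp [hB _ _, hα]

theorem IsLowerBidiagonalWith.transpose_mul_self_apply_succ_pos
    (hB : IsLowerBidiagonalWith α β B) (hα : ∀ i, 0 < α i) (hβ : ∀ i, 0 < β i) (i j : Fin n)
    (hij : (j : ℕ) = i + 1) : 0 < (Bᵀ * B) i j := by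
  have hBnn := hB.nonneg hα hβ
  refine mul_apply_pos (fun a b => hBnn b a) hBnn (l := i.succ) ?_ ?_ <;>
    simp [hB _ _, hα, hβ, hij]

end LowerBidiagonal

/-- the LSMR approximation errors to `AᵀA` strictly decrease:
for `1 ≤ k ≤ n-2`. -/
theorem lsmr_rank_k_approx_error_strict_decreasing
    (m n : ℕ) (hn : 2 ≤ n)
    (A : Matrix (Fin m) (Fin n) ℝ)
    (P : Matrix (Fin m) (Fin (n + 1)) ℝ) (hP : Pᵀ * P = 1)
    (Q : Matrix (Fin n) (Fin n) ℝ) (hQ : Qᵀ * Q = 1)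
    (α : Fin n → ℝ) (hα : ∀ i, 0 < α i)
    (β : Fin n → ℝ) (hβ : ∀ i, 0 < β i)
    (B : Matrix (Fin (n + 1)) (Fin n) ℝ)
    (hB : ∀ (i : Fin (n + 1)) (j : Fin n),
      B i j = if (i : ℕ) = (j : ℕ) then α j
        else if (i : ℕ) = (j : ℕ) + 1 then β j else 0)
    (hA : A = P * B * Qᵀ)
    (k : ℕ) (hk2 : k ≤ n - 2) :
    specNorm (Aᵀ * A -
        colSub Q (k + 2) (by omega) * (colSub Q (k + 2) (by omega))ᵀ * (Aᵀ * A) *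
          (colSub Q (k + 1) (by omega) * (colSub Q (k + 1) (by omega))ᵀ)) <
      specNorm (Aᵀ * A -
        colSub Q (k + 1) (by omega) * (colSub Q (k + 1) (by omega))ᵀ * (Aᵀ * A) *
          (colSub Q k (by omega) * (colSub Q k (by omega))ᵀ)) := by
  replace hB : IsLowerBidiagonalWith α β B := hB
  have hAA : Aᵀ * A = Q * (Bᵀ * B) * Qᵀ := by
    rw [hA, transpose_mul, transpose_mul, transpose_transpose]
    simp only [Matrix.mul_assoc]
    rw [← Matrix.mul_assoc Pᵀ P, hP, Matrix.one_mul]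
  have herr : ∀ j (h₁ : j + 1 ≤ n) (h₀ : j ≤ n),
      specNorm (Aᵀ * A - colSub Q (j + 1) h₁ * (colSub Q (j + 1) h₁)ᵀ * (Aᵀ * A) *
        (colSub Q j h₀ * (colSub Q j h₀)ᵀ)) = ‖Bᵀ * B * tailProj n j‖ := fun j h₁ h₀ => by
    rw [specNorm_eq_l2_opNorm, hAA, colSub_mul_transpose_colSub,
      colSub_mul_transpose_colSub, conj_sub_conj_headProj_mul_conj_mul_conj_headProj hQ
        hB.transpose_mul_self_apply_eq_zero,
      norm_mul_mul_transpose_of_mem_orthogonalGroup ((mem_orthogonalGroup_iff' _ _).2 hQ)]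
  rw [herr (k + 1) (by omega) (by omega), herr k (by omega) (by omega)]
  exact norm_mul_tailProj_succ_lt (by omega)
    (mul_apply_nonneg (fun a b => hB.nonneg hα hβ b a) (hB.nonneg hα hβ))
    (hB.transpose_mul_self_apply_self_pos hα hβ) (hB.transpose_mul_self_apply_succ_pos hα hβ)
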